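/- Let K be a Markov kernel on a Polish space (Ω,d) with granularity σ_∞ = (1/2) sup_x diam(Supp K(x,·)). Fix constants 0 ≤ A, B ≤ 1 and a function φ satisfying |φ(x) − φ(y)| ≤ max(A·d(x,y), B) for all x,y. Then for any λ ≤ min(1/(3Aσ_∞), 2/(3B)), (K e^{λφ})(x) ≤ e^{λ(Kφ)(x)} (1 + λ² Var_{K(x,·)}(φ)) ≤ exp(λ(Kφ)(x) + λ² Var_{K(x,·)}(φ)) for all x. -/

import Mathlib

/-!
The granularity bound makes `φ` vary by at most `C = max (2 A σinf) B` on the support of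
`K x`, so `φ` stays within `C` of its mean there and `λ C ≤ 1`. On `|t| ≤ 1` the exponential is
dominated by its quadratic Taylor polynomial, `exp t ≤ 1 + t + t²`; integrating this bound at
`t = λ (φ - Kφ(x))` kills the linear term and turns the quadratic one into `λ² Var`.
-/

open MeasureTheory ProbabilityTheory

noncomputable section

variable {Ω : Type*} [MeasurableSpace Ω] [MetricSpace Ω]

namespace ProbabilityTheory

variable {α : Type*} {mα : MeasurableSpace α} {μ : Measure α} [IsProbabilityMeasure μ]
  {X : α → ℝ} {C : ℝ}

lemma memLp_top_of_ae_ae_abs_sub_le (hX : AEStronglyMeasurable X μ)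
    (h : ∀ᵐ y ∂μ, ∀ᵐ z ∂μ, |X y - X z| ≤ C) : MemLp X ⊤ μ := by
  obtain ⟨y, hy⟩ := h.exists
  refine memLp_top_of_bound hX (|X y| + C) ?_
  filter_upwards [hy] with z hz
  rw [Real.norm_eq_abs]
  linarith [abs_sub_abs_le_abs_sub (X z) (X y), abs_sub_comm (X y) (X z)]

lemma ae_abs_sub_integral_le_of_ae_ae (hX : Integrable X μ)
    (h : ∀ᵐ y ∂μ, ∀ᵐ z ∂μ, |X y - X z| ≤ C) : ∀ᵐ y ∂μ, |X y - μ[X]| ≤ C := by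
  filter_upwards [h] with y hy
  have hmean : X y - μ[X] = ∫ z, (X y - X z) ∂μ := by
    rw [integral_sub (integrable_const _) hX, integral_const, probReal_univ, one_smul]
  calc |X y - μ[X]| ≤ ∫ z, |X y - X z| ∂μ := by
        rw [hmean]; exact abs_integral_le_integral_abs
    _ ≤ ∫ _, C ∂μ := integral_mono_ae ((integrable_const _).sub hX).abs (integrable_const _) hy
    _ = C := by simp

lemma integral_exp_mul_le_of_ae_abs_mul_sub_le_one {t : ℝ} (hX : MemLp X 2 μ)
    (h : ∀ᵐ ω ∂μ, |t * (X ω - μ[X])| ≤ 1) :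
    ∫ ω, Real.exp (t * X ω) ∂μ ≤ Real.exp (t * μ[X]) * (1 + t ^ 2 * Var[X; μ]) := by
  set m := μ[X]
  have hXi : Integrable X μ := hX.integrable one_le_two
  have hlin : Integrable (fun ω ↦ t * (X ω - m)) μ := (hXi.sub (integrable_const m)).const_mul t
  have hsq : Integrable (fun ω ↦ (t * (X ω - m)) ^ 2) μ := by
    simpa only [mul_pow, Pi.sub_apply] using
      (hX.sub (memLp_const m)).integrable_sq.const_mul (t ^ 2)
  have haffine : Integrable (fun ω ↦ 1 + t * (X ω - m)) μ := (integrable_const 1).add hlin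
  have htaylor : ∀ᵐ ω ∂μ, Real.exp (t * X ω) ≤
      Real.exp (t * m) * (1 + t * (X ω - m) + (t * (X ω - m)) ^ 2) := by
    filter_upwards [h] with ω hω
    have hquad := (abs_sub_le_iff.1 (Real.abs_exp_sub_one_sub_id_le hω)).1
    rw [show t * X ω = t * m + t * (X ω - m) by ring, Real.exp_add]
    gcongr
    linarith
  have hlin0 : ∫ ω, t * (X ω - m) ∂μ = 0 := by
    rw [integral_const_mul, integral_sub hXi (integrable_const m), integral_const,
      probReal_univ, one_smul, sub_self, mul_zero]
  have hsq_eq : ∫ ω, (t * (X ω - m)) ^ 2 ∂μ = t ^ 2 * Var[X; μ] := by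
    simp only [mul_pow]
    rw [integral_const_mul, variance_eq_integral hXi.aemeasurable]
  calc ∫ ω, Real.exp (t * X ω) ∂μ
      ≤ ∫ ω, Real.exp (t * m) * (1 + t * (X ω - m) + (t * (X ω - m)) ^ 2) ∂μ :=
        integral_mono_of_nonneg (.of_forall fun _ ↦ (Real.exp_pos _).le)
          ((haffine.add hsq).const_mul _) htaylor
    _ = Real.exp (t * m) * (1 + t ^ 2 * Var[X; μ]) := by
        rw [integral_const_mul, integral_add haffine hsq,
          integral_add (integrable_const 1) hlin, hlin0, hsq_eq]
        simp

end ProbabilityTheory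

theorem exp_moment_bound_general
    (K : Kernel Ω Ω) [IsMarkovKernel K]
    (σinf : ℝ)
    (hgran : ∀ x : Ω, ∀ᵐ y ∂(K x), ∀ᵐ z ∂(K x), dist y z ≤ 2 * σinf)
    (A B : ℝ) (hA0 : 0 ≤ A)
    (φ : Ω → ℝ) (hφmeas : Measurable φ)
    (hφ : ∀ x y : Ω, |φ x - φ y| ≤ max (A * dist x y) B)
    (lam : ℝ) (hlam0 : 0 ≤ lam)
    (hlamA : lam * (3 * A * σinf) ≤ 1) (hlamB : lam * (3 * B) ≤ 2)
    (x : Ω) :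
    (∫ y, Real.exp (lam * φ y) ∂(K x)) ≤
        Real.exp (lam * ∫ y, φ y ∂(K x)) * (1 + lam ^ 2 * variance φ (K x))
    ∧ Real.exp (lam * ∫ y, φ y ∂(K x)) * (1 + lam ^ 2 * variance φ (K x)) ≤
        Real.exp (lam * ∫ y, φ y ∂(K x) + lam ^ 2 * variance φ (K x)) := by
  have hosc : ∀ᵐ y ∂(K x), ∀ᵐ z ∂(K x), |φ y - φ z| ≤ max (2 * A * σinf) B := by
    filter_upwards [hgran x] with y hy
    filter_upwards [hy] with z hz
    have := mul_le_mul_of_nonneg_left hz hA0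
    exact (hφ y z).trans (max_le_max_right B (by linarith))
  have hmem := memLp_top_of_ae_ae_abs_sub_le hφmeas.aestronglyMeasurable hosc
  have hsmall : ∀ᵐ y ∂(K x), |lam * (φ y - ∫ z, φ z ∂(K x))| ≤ 1 := by
    filter_upwards [ae_abs_sub_integral_le_of_ae_ae (hmem.integrable le_top) hosc] with y hy
    rw [abs_mul, abs_of_nonneg hlam0]
    calc lam * |φ y - ∫ z, φ z ∂(K x)| ≤ lam * max (2 * A * σinf) B := by gcongr
      _ ≤ 1 := by rw [mul_max_of_nonneg _ _ hlam0]; exact max_le (by linarith) (by linarith)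
  refine ⟨integral_exp_mul_le_of_ae_abs_mul_sub_le_one (hmem.mono_exponent le_top) hsmall, ?_⟩
  rw [Real.exp_add]
  gcongr
  linarith [Real.add_one_le_exp (lam ^ 2 * variance φ (K x))]

/-- Exponential moment bound (extension of Ollivier's Lemma 38): for a kernel with
granularity `σinf` and a function `φ` with `|φ(x)-φ(y)| ≤ max(A d(x,y), B)`, for
`λ ≤ min(1/(3Aσinf), 2/(3B))` (stated multiplicatively),
`(K e^{λφ})(x) ≤ e^{λ(Kφ)(x)}(1 + λ² Var_{K(x,·)}(φ)) ≤ exp(λ(Kφ)(x) + λ² Var_{K(x,·)}(φ))`. -/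
theorem exp_moment_bound
    (K : Kernel Ω Ω) [IsMarkovKernel K]
    (σinf : ℝ) (hσinf : 0 ≤ σinf)
    (hgran : ∀ x : Ω, ∀ᵐ y ∂(K x), ∀ᵐ z ∂(K x), dist y z ≤ 2 * σinf)
    (A B : ℝ) (hA0 : 0 ≤ A) (hA1 : A ≤ 1) (hB0 : 0 ≤ B) (hB1 : B ≤ 1)
    (φ : Ω → ℝ) (hφmeas : Measurable φ)
    (hφ : ∀ x y : Ω, |φ x - φ y| ≤ max (A * dist x y) B)
    (lam : ℝ) (hlam0 : 0 ≤ lam)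
    (hlamA : lam * (3 * A * σinf) ≤ 1) (hlamB : lam * (3 * B) ≤ 2)
    (x : Ω)
    (hint : Integrable φ (K x))
    (hexpint : Integrable (fun y => Real.exp (lam * φ y)) (K x)) :
    (∫ y, Real.exp (lam * φ y) ∂(K x)) ≤
        Real.exp (lam * ∫ y, φ y ∂(K x)) * (1 + lam ^ 2 * variance φ (K x))
    ∧ Real.exp (lam * ∫ y, φ y ∂(K x)) * (1 + lam ^ 2 * variance φ (K x)) ≤
        Real.exp (lam * ∫ y, φ y ∂(K x) + lam ^ 2 * variance φ (K x)) :=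
  exp_moment_bound_general K σinf hgran A B hA0 φ hφmeas hφ lam hlam0 hlamA hlamB x
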